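/- arXiv:2507.21887 — 3 statements merged into one kernel-verified Lean document; each statement's English description precedes it below -/
import Mathlib

section
/- Define L : ℂ → Matrix (Fin 2) (Fin 2) ℂ by L z = ![![1/z, 1/z], ![0, 1/(2(1+z))]]. Then (fun z => (z−1) • (1 − L z)⁻¹) tends to the matrix ![![1, 4/3], ![0, 0]] along the punctured neighborhood filter 𝓝[≠] 1. -/
open Filter Topology

/-! 1 - L z is upper triangular with diagonal entries (z - 1)/z and (2z + 1)/(2(1 + z)), so its
inverse is explicit. Multiplying by z - 1 cancels the simple pole at the Malthusian parameter 1,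
coming from the (1,1) entry, and leaves a matrix-valued function that is continuous at 1; its
value there is the residue matrix. -/

theorem Matrix.inv_upperTriangular_fin_two {K : Type*} [Field K] {a d : K} (b : K)
    (ha : a ≠ 0) (hd : d ≠ 0) :
    (!![a, b; 0, d])⁻¹ = !![a⁻¹, -b / (a * d); 0, d⁻¹] := by
  refine Matrix.inv_eq_right_inv ?_
  rw [Matrix.mul_fin_two, Matrix.one_fin_two]
  simp [field]

theorem Filter.Tendsto.matrix_fin_two {α R : Type*} [TopologicalSpace R] {l : Filter α}
    {f₁₁ f₁₂ f₂₁ f₂₂ : α → R} {a₁₁ a₁₂ a₂₁ a₂₂ : R}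
    (h₁₁ : Tendsto f₁₁ l (𝓝 a₁₁)) (h₁₂ : Tendsto f₁₂ l (𝓝 a₁₂))
    (h₂₁ : Tendsto f₂₁ l (𝓝 a₂₁)) (h₂₂ : Tendsto f₂₂ l (𝓝 a₂₂)) :
    Tendsto (fun x => !![f₁₁ x, f₁₂ x; f₂₁ x, f₂₂ x]) l (𝓝 !![a₁₁, a₁₂; a₂₁, a₂₂]) :=
  tendsto_pi_nhds.2 fun i => tendsto_pi_nhds.2 fun j => by
    fin_cases i <;> fin_cases j <;> assumption

noncomputable def laplaceMatrix (z : ℂ) : Matrix (Fin 2) (Fin 2) ℂ :=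
  !![1/z, 1/z; 0, 1/(2*(1+z))]

theorem one_sub_laplaceMatrix {z : ℂ} (hz₀ : z ≠ 0) (hz₂ : 1 + z ≠ 0) :
    1 - laplaceMatrix z = !![(z - 1) / z, -(1 / z); 0, (2 * z + 1) / (2 * (1 + z))] := by
  rw [laplaceMatrix, Matrix.one_fin_two]
  ext i j
  fin_cases i <;> fin_cases j <;> simp [field]
  ring

theorem sub_one_smul_inv_one_sub_laplaceMatrix {z : ℂ} (hz₀ : z ≠ 0) (hz₁ : z ≠ 1)
    (hz₂ : 1 + z ≠ 0) (hz₃ : 2 * z + 1 ≠ 0) :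
    (z - 1) • (1 - laplaceMatrix z)⁻¹ =
      !![z, 2 * (1 + z) / (2 * z + 1); 0, (z - 1) * (2 * (1 + z) / (2 * z + 1))] := by
  rw [one_sub_laplaceMatrix hz₀ hz₂, Matrix.inv_upperTriangular_fin_two _
    (div_ne_zero (sub_ne_zero.mpr hz₁) hz₀) (div_ne_zero hz₃ (mul_ne_zero two_ne_zero hz₂))]
  ext i j
  fin_cases i <;> fin_cases j <;> simp [field]

theorem residue_matrix_example_two_types :
    Tendsto
      (fun z : ℂ => (z - 1) •
        ((1 : Matrix (Fin 2) (Fin 2) ℂ) -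
          !![1/z, 1/z; 0, 1/(2*(1+z))])⁻¹)
      (nhdsWithin 1 {(1 : ℂ)}ᶜ)
      (nhds !![(1 : ℂ), 4/3; 0, 0]) := by
  have hq : Tendsto (fun z : ℂ => 2 * (1 + z) / (2 * z + 1)) (𝓝 1) (𝓝 (4 / 3)) := by
    have hcont : ContinuousAt (fun z : ℂ => 2 * (1 + z) / (2 * z + 1)) 1 := by
      fun_prop (disch := norm_num)
    convert hcont.tendsto using 2
    norm_num
  have hlim : Tendsto
      (fun z : ℂ => !![z, 2 * (1 + z) / (2 * z + 1); 0, (z - 1) * (2 * (1 + z) / (2 * z + 1))])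
      (𝓝 1) (𝓝 !![1, 4 / 3; 0, 0]) := by
    simpa using Tendsto.matrix_fin_two tendsto_id hq tendsto_const_nhds
      ((tendsto_id.sub_const 1).mul hq)
  refine (hlim.mono_left nhdsWithin_le_nhds).congr' ?_
  have hne {w : ℂ} (hw : (1 : ℂ) ≠ w) : ∀ᶠ z in 𝓝[≠] (1 : ℂ), z ≠ w :=
    nhdsWithin_le_nhds (eventually_ne_nhds hw)
  filter_upwards [self_mem_nhdsWithin, hne one_ne_zero, hne (w := -1) (by norm_num),
    hne (w := -1 / 2) (by norm_num)] with z hz₁ hz₀ hz₂ hz₃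
  refine (sub_one_smul_inv_one_sub_laplaceMatrix hz₀ hz₁ ?_ ?_).symm
  · contrapose! hz₂
    linear_combination hz₂
  · contrapose! hz₃
    linear_combination hz₃ / 2
end

section
/- Let α > 0 be a real number and define L : ℂ → Matrix (Fin 2) (Fin 2) ℂ by L z = ![![α/z, 1], ![0, α/z]]. Then (fun z => (z−α)^2 • (1 − L z)⁻¹) tends to the matrix ![![0, α²], ![0, 0]] along the punctured neighborhood filter 𝓝[≠] α. -/
open Filter

theorem leading_laurent_coefficient_example_double_pole
    (α : ℝ) (hα : 0 < α) :
    Tendsto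
      (fun z : ℂ => (z - (α : ℂ))^2 •
        ((1 : Matrix (Fin 2) (Fin 2) ℂ) - !![(α : ℂ)/z, 1; 0, (α : ℂ)/z])⁻¹)
      (nhdsWithin (α : ℂ) {(α : ℂ)}ᶜ)
      (nhds !![0, (α : ℂ)^2; 0, 0]) := by
  have hα0 : (α : ℂ) ≠ 0 := by exact_mod_cast hα.ne'
  have hg : Tendsto (fun z : ℂ => !![(z - α) * z, z ^ 2; 0, (z - α) * z])
      (nhdsWithin (α : ℂ) {(α : ℂ)}ᶜ) (nhds !![0, (α : ℂ)^2; 0, 0]) := by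
    have hc : Continuous (fun z : ℂ => !![(z - α) * z, z ^ 2; 0, (z - α) * z]) := by
      apply continuous_matrix
      intro i j
      fin_cases i <;> fin_cases j <;> simp <;> continuity
    have := ((hc.tendsto (α : ℂ)).mono_left (nhdsWithin_le_nhds (s := {(α:ℂ)}ᶜ)))
    simpa using this
  apply hg.congr'
  have hmem : {(0 : ℂ)}ᶜ ∈ nhdsWithin (α : ℂ) {(α : ℂ)}ᶜ :=
    nhdsWithin_le_nhds (compl_singleton_mem_nhds hα0)
  filter_upwards [hmem, self_mem_nhdsWithin] with z hz0 hzα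
  have hz0 : z ≠ 0 := hz0
  have hzα : z ≠ (α : ℂ) := hzα
  have hsub : z - (α : ℂ) ≠ 0 := sub_ne_zero.mpr hzα
  have hinv : ((1 : Matrix (Fin 2) (Fin 2) ℂ) - !![(α : ℂ)/z, 1; 0, (α : ℂ)/z])⁻¹
      = !![z/(z - α), z^2/(z - α)^2; 0, z/(z - α)] := by
    apply Matrix.inv_eq_right_inv
    ext i j
    fin_cases i <;> fin_cases j <;>
      simp [Matrix.mul_apply, Fin.sum_univ_two, Matrix.one_apply] <;>
      field_simp <;> ring
  rw [hinv]
  ext i j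
  fin_cases i <;> fin_cases j <;>
    simp [Matrix.smul_apply] <;> field_simp <;> ring
end

section
/- Let α > 0 be a real number and define L : ℂ → Matrix (Fin 2) (Fin 2) ℂ by L z = ![![α/z, 1], ![0, α/z]]. Then (fun z => (z−α) • ((1 − L z)⁻¹ − (z−α)⁻² • ![![0, α²], ![0, 0]])) tends to the matrix ![![α, 2α], ![0, α]] along the punctured neighborhood filter 𝓝[≠] α. -/
open Filter

lemma inv_example (α z : ℂ) (hz : z ≠ 0) (hzα : z - α ≠ 0) :
    ((1 : Matrix (Fin 2) (Fin 2) ℂ) - !![α/z, 1; 0, α/z])⁻¹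
      = !![z/(z-α), z^2/(z-α)^2; 0, z/(z-α)] := by
  apply Matrix.inv_eq_right_inv
  ext i j
  fin_cases i <;> fin_cases j <;>
    simp [Matrix.mul_apply, Fin.sum_univ_two, Matrix.one_apply] <;>
    field_simp <;> ring

theorem second_laurent_coefficient_example_double_pole
    (α : ℝ) (hα : 0 < α) :
    Tendsto
      (fun z : ℂ => (z - (α : ℂ)) •
        (((1 : Matrix (Fin 2) (Fin 2) ℂ) - !![(α : ℂ)/z, 1; 0, (α : ℂ)/z])⁻¹
          - ((z - (α : ℂ)) ^ 2)⁻¹ • !![0, (α : ℂ)^2; 0, 0]))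
      (nhdsWithin (α : ℂ) {(α : ℂ)}ᶜ)
      (nhds !![(α : ℂ), 2*(α : ℂ); 0, (α : ℂ)]) := by
  have hcont : Tendsto (fun z : ℂ => !![z, z + (α : ℂ); 0, z])
      (nhdsWithin (α : ℂ) {(α : ℂ)}ᶜ) (nhds !![(α : ℂ), 2*(α : ℂ); 0, (α : ℂ)]) := by
    have : Continuous fun z : ℂ => !![z, z + (α : ℂ); 0, z] := by
      apply continuous_matrix
      intro i j
      fin_cases i <;> fin_cases j <;> simp <;> continuity
    have h : Tendsto (fun z : ℂ => !![z, z + (α : ℂ); 0, z])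
        (nhdsWithin (α : ℂ) {(α : ℂ)}ᶜ) (nhds !![(α : ℂ), (α : ℂ) + (α : ℂ); 0, (α : ℂ)]) :=
      (this.tendsto (α : ℂ)).mono_left nhdsWithin_le_nhds
    convert h using 2
    ring
  apply hcont.congr'
  have hne : (α : ℂ) ≠ 0 := by
    simpa using hα.ne'
  have h0 : ∀ᶠ z in nhdsWithin (α : ℂ) {(α : ℂ)}ᶜ, z ≠ 0 := by
    have : {z : ℂ | z ≠ 0} ∈ nhds (α : ℂ) := isOpen_compl_singleton.mem_nhds hne
    exact eventually_nhdsWithin_of_eventually_nhds this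
  have h1 : ∀ᶠ z in nhdsWithin (α : ℂ) {(α : ℂ)}ᶜ, z ≠ (α : ℂ) :=
    eventually_mem_nhdsWithin
  filter_upwards [h0, h1] with z hz hzα
  have hsub : z - (α : ℂ) ≠ 0 := sub_ne_zero.mpr hzα
  rw [inv_example _ _ hz hsub]
  ext i j
  fin_cases i <;> fin_cases j <;>
    simp [Matrix.smul_apply] <;> field_simp <;> ring
end
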